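/- Let M ≥ 1 and let δ : ℤ → ℝ be a sequence with δ n > 0 for all n that satisfies the quasisymmetric shear condition with constant M. Then the piecewise linear developing map h_δ : ℝ → ℝ is a strictly increasing continuous bijection of ℝ onto ℝ (in particular, a homeomorphism of ℝ). -/

import Mathlib

/-- `Hmap δ n` is the value at the integer `n` of the developing map:
`H 0 = 0`, `H (n+1) = H n + δ n`. -/
noncomputable def Hmap (δ : ℤ → ℝ) (n : ℤ) : ℝ :=
  if 0 ≤ n then ∑ j ∈ Finset.range n.toNat, δ j
  else -∑ j ∈ Finset.range (-n).toNat, δ (n + j)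

/-- The piecewise linear developing map associated to the sequence `δ`. -/
noncomputable def hdev (δ : ℤ → ℝ) (x : ℝ) : ℝ :=
  Hmap δ ⌊x⌋ + δ ⌊x⌋ * (x - (⌊x⌋ : ℝ))

/-- The quasisymmetric shear condition with constant `M` for a positive sequence `δ`:
`1/M ≤ (δ m + ⋯ + δ (m+k)) / (δ (m-1) + ⋯ + δ (m-k-1)) ≤ M`. -/
def ShearQS (δ : ℤ → ℝ) (M : ℝ) : Prop :=
  ∀ (m : ℤ) (k : ℕ),
    1 / M ≤ (∑ i ∈ Finset.range (k + 1), δ (m + (i : ℤ))) /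
        (∑ i ∈ Finset.range (k + 1), δ (m - 1 - (i : ℤ))) ∧
      (∑ i ∈ Finset.range (k + 1), δ (m + (i : ℤ))) /
        (∑ i ∈ Finset.range (k + 1), δ (m - 1 - (i : ℤ))) ≤ M

/-- The `M`-quasisymmetry condition for a map `h : ℝ → ℝ`. -/
def QSCond (h : ℝ → ℝ) (M : ℝ) : Prop :=
  ∀ (x t : ℝ), 0 < t →
    1 / M ≤ (h (x + t) - h x) / (h x - h (x - t)) ∧
      (h (x + t) - h x) / (h x - h (x - t)) ≤ M


/-!
`Hmap δ` is strictly increasing and `hdev δ` interpolates it linearly on each `[n, n + 1]`, so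
`hdev δ` is strictly increasing, and it is continuous once it is surjective. Surjectivity
amounts to `Hmap δ n → ±∞` as `n → ±∞`. Positivity alone does not give this; the shear
condition does. At `m = n` and `k = n - 1` it gives
`Hmap δ (2 * n) - Hmap δ n ≥ Hmap δ n / M ≥ δ 0 / M`, so `Hmap δ (2 ^ k)` grows at least
linearly in `k`. At `m = 0` it gives `-Hmap δ (-n) ≥ Hmap δ n / M`.
-/

open Finset Filter

theorem StrictMono.tendsto_atTop_of_doubling {a : ℕ → ℝ} {M : ℝ} (ha : StrictMono a)
    (hM : 0 < M) (hdouble : ∀ n, a n - a 0 ≤ M * (a (2 * n) - a n)) :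
    Tendsto a atTop atTop := by
  set c := (a 1 - a 0) / M
  have hc : 0 < c := div_pos (sub_pos.2 (ha zero_lt_one)) hM
  have hgrowth : ∀ k : ℕ, a 1 + k * c ≤ a (2 ^ k) := by
    intro k
    induction k with
    | zero => simp
    | succ k ih =>
      have hstep : c ≤ a (2 * 2 ^ k) - a (2 ^ k) := by
        rw [div_le_iff₀' hM]
        exact (hdouble _).trans' (by gcongr; exact ha.monotone Nat.one_le_two_pow)
      rw [pow_succ', Nat.cast_succ]
      linarith
  refine tendsto_atTop_atTop_of_monotone ha.monotone fun b => ?_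
  obtain ⟨k, hk⟩ := exists_nat_ge ((b - a 1) / c)
  exact ⟨2 ^ k, by rw [div_le_iff₀ hc] at hk; linarith [hgrowth k]⟩

theorem Monotone.exists_le_lt_succ_of_tendsto {α : Type*} [LinearOrder α] [NoMaxOrder α]
    {f : ℤ → α} (hf : Monotone f) (hbot : Tendsto f atBot atBot)
    (htop : Tendsto f atTop atTop) (y : α) : ∃ n, f n ≤ y ∧ y < f (n + 1) := by
  obtain ⟨N, hN⟩ := (htop.eventually_gt_atTop y).exists
  have hbdd : ∀ z, f z ≤ y → z ≤ N := fun z hz => (hf.reflect_lt (hz.trans_lt hN)).le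
  obtain ⟨n, hn, hmax⟩ :=
    Int.exists_greatest_of_bdd ⟨N, hbdd⟩ (hbot.eventually_le_atBot y).exists
  exact ⟨n, hn, lt_of_not_ge fun h => (hmax _ h).not_gt (lt_add_one n)⟩

lemma Hmap_zero (δ : ℤ → ℝ) : Hmap δ 0 = 0 := by simp [Hmap]

lemma Hmap_natCast (δ : ℤ → ℝ) (n : ℕ) : Hmap δ n = ∑ j ∈ range n, δ j := by
  simp [Hmap]

lemma Hmap_neg_natCast (δ : ℤ → ℝ) (n : ℕ) :
    Hmap δ (-n) = -∑ j ∈ range n, δ (-n + j) := by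
  rcases n with _ | n
  · simp [Hmap]
  · rw [Hmap, if_neg (by omega)]
    simp

lemma Hmap_succ (δ : ℤ → ℝ) (n : ℤ) : Hmap δ (n + 1) = Hmap δ n + δ n := by
  obtain ⟨n, rfl | rfl⟩ := Int.eq_nat_or_neg n
  · rw [← Nat.cast_succ, Hmap_natCast, Hmap_natCast, sum_range_succ]
  · rcases n with _ | m
    · simp [Hmap]
    · rw [show -((m + 1 : ℕ) : ℤ) + 1 = -m by push_cast; ring, Hmap_neg_natCast,
        Hmap_neg_natCast, sum_range_succ']
      push_cast
      ring_nf

lemma sum_range_add_eq_Hmap_sub (δ : ℤ → ℝ) (m : ℤ) (k : ℕ) :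
    ∑ i ∈ range k, δ (m + i) = Hmap δ (m + k) - Hmap δ m := by
  induction k with
  | zero => simp
  | succ k ih =>
    rw [sum_range_succ, ih, Nat.cast_succ, ← add_assoc, Hmap_succ]
    ring

lemma sum_range_sub_eq_Hmap_sub (δ : ℤ → ℝ) (m : ℤ) (k : ℕ) :
    ∑ i ∈ range k, δ (m - 1 - i) = Hmap δ m - Hmap δ (m - k) := by
  induction k with
  | zero => simp
  | succ k ih =>
    have hstep := Hmap_succ δ (m - 1 - k)
    rw [show m - 1 - k + 1 = m - k by ring] at hstep
    rw [sum_range_succ, ih, Nat.cast_succ, show m - (k + 1) = m - 1 - k by ring]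
    linarith

lemma hdev_intCast_add (δ : ℤ → ℝ) (n : ℤ) {t : ℝ} (ht₀ : 0 ≤ t) (ht₁ : t < 1) :
    hdev δ (n + t) = Hmap δ n + δ n * t := by
  have hfloor : ⌊(n : ℝ) + t⌋ = n := by
    rw [Int.floor_intCast_add, Int.floor_eq_zero_iff.2 ⟨ht₀, ht₁⟩, add_zero]
  rw [hdev, hfloor, add_sub_cancel_left]

section

variable {δ : ℤ → ℝ} {M : ℝ}

lemma Hmap_strictMono (hpos : ∀ n, 0 < δ n) : StrictMono (Hmap δ) :=
  strictMono_int_of_lt_succ fun n => by simpa [Hmap_succ] using hpos n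

lemma hdev_lt_Hmap_floor_add_one (hpos : ∀ n, 0 < δ n) (x : ℝ) :
    hdev δ x < Hmap δ (⌊x⌋ + 1) := by
  rw [Hmap_succ, hdev, add_lt_add_iff_left]
  exact mul_lt_of_lt_one_right (hpos _) (Int.fract_lt_one x)

lemma Hmap_floor_le_hdev (hpos : ∀ n, 0 < δ n) (x : ℝ) : Hmap δ ⌊x⌋ ≤ hdev δ x :=
  le_add_of_nonneg_right (mul_nonneg (hpos _).le (Int.fract_nonneg x))

lemma hdev_strictMono (hpos : ∀ n, 0 < δ n) : StrictMono (hdev δ) := by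
  intro x y hxy
  rcases (Int.floor_le_floor hxy.le).eq_or_lt with hfloor | hfloor
  · rw [hdev, hdev, ← hfloor, add_lt_add_iff_left]
    exact mul_lt_mul_of_pos_left (by linarith) (hpos _)
  · calc hdev δ x < Hmap δ (⌊x⌋ + 1) := hdev_lt_Hmap_floor_add_one hpos x
      _ ≤ Hmap δ ⌊y⌋ := (Hmap_strictMono hpos).monotone hfloor
      _ ≤ hdev δ y := Hmap_floor_le_hdev hpos y

lemma ShearQS.pos (hpos : ∀ n, 0 < δ n) (h : ShearQS δ M) : 0 < M :=
  (div_pos (by simpa using hpos 0) (by simpa using hpos (-1))).trans_le (h 0 0).2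

lemma ShearQS.Hmap_sub_le_mul (hpos : ∀ n, 0 < δ n) (h : ShearQS δ M) (m : ℤ) (k : ℕ) :
    Hmap δ m - Hmap δ (m - k) ≤ M * (Hmap δ (m + k) - Hmap δ m) ∧
      Hmap δ (m + k) - Hmap δ m ≤ M * (Hmap δ m - Hmap δ (m - k)) := by
  rcases k with _ | k
  · simp
  have hM := h.pos hpos
  have hleft : 0 < Hmap δ m - Hmap δ (m - (k + 1 : ℕ)) :=
    sub_pos.2 (Hmap_strictMono hpos (by omega))
  obtain ⟨hlo, hhi⟩ := h m k
  rw [sum_range_add_eq_Hmap_sub, sum_range_sub_eq_Hmap_sub] at hlo hhi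
  rw [div_le_div_iff₀ hM hleft] at hlo
  rw [div_le_iff₀ hleft] at hhi
  constructor <;> linarith

lemma ShearQS.tendsto_Hmap_natCast_atTop (hpos : ∀ n, 0 < δ n) (h : ShearQS δ M) :
    Tendsto (fun n : ℕ => Hmap δ n) atTop atTop := by
  refine ((Hmap_strictMono hpos).comp Nat.strictMono_cast).tendsto_atTop_of_doubling
    (h.pos hpos) fun n => ?_
  simpa [two_mul] using (h.Hmap_sub_le_mul hpos n n).1

lemma ShearQS.tendsto_Hmap_atTop (hpos : ∀ n, 0 < δ n) (h : ShearQS δ M) :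
    Tendsto (Hmap δ) atTop atTop :=
  tendsto_atTop_atTop_of_monotone (Hmap_strictMono hpos).monotone fun b =>
    let ⟨n, hn⟩ := ((h.tendsto_Hmap_natCast_atTop hpos).eventually_ge_atTop b).exists
    ⟨n, hn⟩

lemma ShearQS.tendsto_Hmap_atBot (hpos : ∀ n, 0 < δ n) (h : ShearQS δ M) :
    Tendsto (Hmap δ) atBot atBot := by
  have hM := h.pos hpos
  have hneg : Tendsto (fun n : ℕ => -Hmap δ n / M) atTop atBot :=
    (tendsto_neg_atTop_atBot.comp (h.tendsto_Hmap_natCast_atTop hpos)).atBot_div_const hM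
  refine tendsto_atBot_atBot_of_monotone (Hmap_strictMono hpos).monotone fun b => ?_
  obtain ⟨n, hn⟩ := (hneg.eventually_le_atBot b).exists
  refine ⟨-n, le_trans ?_ hn⟩
  have hcompare := (h.Hmap_sub_le_mul hpos 0 n).2
  simp only [zero_add, zero_sub, Hmap_zero, sub_zero] at hcompare
  rw [le_div_iff₀ hM]
  linarith

lemma ShearQS.hdev_surjective (hpos : ∀ n, 0 < δ n) (h : ShearQS δ M) :
    Function.Surjective (hdev δ) := by
  intro y
  obtain ⟨n, hn, hn'⟩ := (Hmap_strictMono hpos).monotone.exists_le_lt_succ_of_tendsto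
    (h.tendsto_Hmap_atBot hpos) (h.tendsto_Hmap_atTop hpos) y
  rw [Hmap_succ] at hn'
  refine ⟨n + (y - Hmap δ n) / δ n, ?_⟩
  rw [hdev_intCast_add δ n (div_nonneg (sub_nonneg.2 hn) (hpos n).le)
    ((div_lt_one (hpos n)).2 (by linarith)), mul_div_cancel₀ _ (hpos n).ne']
  ring

end

theorem developing_map_homeomorphism_general (M : ℝ) (δ : ℤ → ℝ)
    (hpos : ∀ n, 0 < δ n) (hshear : ShearQS δ M) :
    StrictMono (hdev δ) ∧ Continuous (hdev δ) ∧ Function.Bijective (hdev δ) := by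
  have hmono := hdev_strictMono hpos
  have hsurj := hshear.hdev_surjective hpos
  exact ⟨hmono, hmono.monotone.continuous_of_surjective hsurj, hmono.injective, hsurj⟩

theorem developing_map_homeomorphism (M : ℝ) (hM : 1 ≤ M) (δ : ℤ → ℝ)
    (hpos : ∀ n, 0 < δ n) (hshear : ShearQS δ M) :
    StrictMono (hdev δ) ∧ Continuous (hdev δ) ∧ Function.Bijective (hdev δ) :=
  developing_map_homeomorphism_general M δ hpos hshear
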